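/- Consider K agents running federated inference with asymmetric asynchronous communication. Almost surely, the fusion-center belief on the true hypothesis converges to one: lim_{i→∞} μ_i(θ°) = 1 with probability 1. Precisely: for each i ≥ 1 and agent k let ψ_{k,i}(θ) ∝ f_k(ξ_{k,i}|θ) μ_{i-1}(θ) (normalized over θ), and let μ_i(θ) ∝ ∏_{k=1}^K ( ψ_{k,i}(θ)^{q_{k,i}} μ_{i-1}(θ)^{1-q_{k,i}} )^{π_k} (normalized over θ). Then μ_i(θ°) → 1 almost surely. -/

import Mathlib

/-!
Since the weights `π k` sum to one, the normalizing constants cancel from the log-ratio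
`log μ_i(θ) - log μ_i(θ°)`, which therefore performs a random walk: at step `i` it moves by
`∑ k, π k * q_{k,i} * (log f_k(ξ_{k,i}|θ) - log f_k(ξ_{k,i}|θ°))`. For each agent these increments
are i.i.d. with mean `-p_k d_k(θ)`, so by the strong law of large numbers the walk has drift
`-∑ k, π k p_k d_k(θ)`, which is negative by Gibbs' inequality and global identifiability.
Hence `μ_i(θ) / μ_i(θ°) → 0` for every `θ ≠ θ°`, and `μ_i(θ°) → 1`.
-/

open MeasureTheory ProbabilityTheory Filter Topology

lemma tendsto_atBot_of_tendsto_div_natCast {a : ℕ → ℝ} {L : ℝ} (hL : L < 0)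
    (h : Tendsto (fun n : ℕ => a n / n) atTop (𝓝 L)) : Tendsto a atTop atBot := by
  refine (h.neg_mul_atTop hL tendsto_natCast_atTop_atTop).congr' ?_
  filter_upwards [eventually_ne_atTop 0] with n hn
  exact div_mul_cancel₀ _ (Nat.cast_ne_zero.2 hn)

lemma tendsto_of_log_sub_log_tendsto_atBot {Θ : Type*} [Fintype Θ] {m : ℕ → Θ → ℝ} {θ₀ : Θ}
    (hpos : ∀ n θ, 0 < m n θ) (hsum : ∀ᶠ n in atTop, ∑ θ, m n θ = 1)
    (h : ∀ θ ≠ θ₀, Tendsto (fun n => Real.log (m n θ) - Real.log (m n θ₀)) atTop atBot) :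
    Tendsto (fun n => m n θ₀) atTop (𝓝 1) := by
  classical
  have hratio : ∀ θ, Tendsto (fun n => m n θ / m n θ₀) atTop
      (𝓝 (if θ = θ₀ then 1 else 0)) := by
    intro θ
    split_ifs with hθ
    · subst hθ
      simp only [div_self (hpos _ _).ne', tendsto_const_nhds]
    · refine (Real.tendsto_exp_atBot.comp (h θ hθ)).congr fun n => ?_
      rw [Function.comp_apply, Real.exp_sub, Real.exp_log (hpos n θ), Real.exp_log (hpos n θ₀)]
  have hsum_ratio := tendsto_finsetSum Finset.univ fun θ _ => hratio θ
  rw [Finset.sum_ite_eq' Finset.univ θ₀, if_pos (Finset.mem_univ θ₀)] at hsum_ratio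
  have hinv := hsum_ratio.inv₀ one_ne_zero
  rw [inv_one] at hinv
  refine hinv.congr' ?_
  filter_upwards [hsum] with n hn
  rw [← Finset.sum_div, hn, one_div, inv_inv]

section Pooling

variable {ι Θ : Type*} [Fintype ι] [Fintype Θ]

noncomputable def normalizeWeights (g : Θ → ℝ) (θ : Θ) : ℝ := g θ / ∑ θ', g θ'

lemma normalizeWeights_pos {g : Θ → ℝ} (hg : ∀ θ, 0 < g θ) (θ : Θ) :
    0 < normalizeWeights g θ :=
  div_pos (hg θ) (Finset.sum_pos (fun θ' _ => hg θ') ⟨θ, Finset.mem_univ θ⟩)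

lemma sum_normalizeWeights {g : Θ → ℝ} (hg : ∑ θ, g θ ≠ 0) : ∑ θ, normalizeWeights g θ = 1 := by
  simp only [normalizeWeights, ← Finset.sum_div, div_self hg]

lemma log_normalizeWeights_sub_log_normalizeWeights {g : Θ → ℝ} (hg : ∀ θ, 0 < g θ)
    (θ θ₀ : Θ) : Real.log (normalizeWeights g θ) - Real.log (normalizeWeights g θ₀) =
      Real.log (g θ) - Real.log (g θ₀) := by
  have hZ : (∑ θ', g θ') ≠ 0 := (Finset.sum_pos (fun θ' _ => hg θ') ⟨θ, Finset.mem_univ θ⟩).ne'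
  rw [normalizeWeights, normalizeWeights, Real.log_div (hg θ).ne' hZ, Real.log_div (hg θ₀).ne' hZ]
  ring

lemma log_prod_rpow_mul_rpow {π q a : ι → ℝ} {b : ℝ} (ha : ∀ k, 0 < a k) (hb : 0 < b) :
    Real.log (∏ k, (a k ^ q k * b ^ (1 - q k)) ^ π k) =
      ∑ k, π k * (q k * Real.log (a k) + (1 - q k) * Real.log b) := by
  have hab : ∀ k, 0 < a k ^ q k * b ^ (1 - q k) := fun k =>
    mul_pos (Real.rpow_pos_of_pos (ha k) _) (Real.rpow_pos_of_pos hb _)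
  rw [Real.log_prod fun k _ => (Real.rpow_pos_of_pos (hab k) _).ne']
  refine Finset.sum_congr rfl fun k _ => ?_
  rw [Real.log_rpow (hab k), Real.log_mul (Real.rpow_pos_of_pos (ha k) _).ne'
    (Real.rpow_pos_of_pos hb _).ne', Real.log_rpow (ha k), Real.log_rpow hb]

/-- One round of the fusion center: agent `k` reports the Bayesian update of the common belief `m`
by its likelihood `ℓ k` if `q k = 1`, and the center substitutes `m` itself if `q k = 0`; the
reports are then pooled geometrically with weights `π`. -/
noncomputable def poolStep (π q : ι → ℝ) (ℓ : ι → Θ → ℝ) (m : Θ → ℝ) : Θ → ℝ :=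
  normalizeWeights fun θ =>
    ∏ k, (normalizeWeights (fun θ' => ℓ k θ' * m θ') θ ^ q k * m θ ^ (1 - q k)) ^ π k

variable {π q : ι → ℝ} {ℓ : ι → Θ → ℝ} {m : Θ → ℝ}

lemma poolStep_weight_pos (hℓ : ∀ k θ, 0 < ℓ k θ) (hm : ∀ θ, 0 < m θ) (θ : Θ) :
    0 < ∏ k, (normalizeWeights (fun θ' => ℓ k θ' * m θ') θ ^ q k * m θ ^ (1 - q k)) ^ π k :=
  Finset.prod_pos fun k _ => Real.rpow_pos_of_pos (mul_pos (Real.rpow_pos_of_pos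
    (normalizeWeights_pos (fun θ' => mul_pos (hℓ k θ') (hm θ')) θ) _)
    (Real.rpow_pos_of_pos (hm θ) _)) _

lemma poolStep_pos (hℓ : ∀ k θ, 0 < ℓ k θ) (hm : ∀ θ, 0 < m θ) (θ : Θ) :
    0 < poolStep π q ℓ m θ :=
  normalizeWeights_pos (poolStep_weight_pos hℓ hm) θ

lemma sum_poolStep [Nonempty Θ] (hℓ : ∀ k θ, 0 < ℓ k θ) (hm : ∀ θ, 0 < m θ) :
    ∑ θ, poolStep π q ℓ m θ = 1 :=
  sum_normalizeWeights
    (Finset.sum_pos (fun θ _ => poolStep_weight_pos hℓ hm θ) Finset.univ_nonempty).ne'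

lemma log_poolStep_sub_log_poolStep (hπ : ∑ k, π k = 1) (hℓ : ∀ k θ, 0 < ℓ k θ)
    (hm : ∀ θ, 0 < m θ) (θ θ₀ : Θ) :
    Real.log (poolStep π q ℓ m θ) - Real.log (poolStep π q ℓ m θ₀) =
      Real.log (m θ) - Real.log (m θ₀) +
        ∑ k, π k * q k * (Real.log (ℓ k θ) - Real.log (ℓ k θ₀)) := by
  set ψ : ι → Θ → ℝ := fun k => normalizeWeights fun θ' => ℓ k θ' * m θ'
  have hℓm : ∀ k θ, 0 < ℓ k θ * m θ := fun k θ => mul_pos (hℓ k θ) (hm θ)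
  have hψ : ∀ k, Real.log (ψ k θ) - Real.log (ψ k θ₀) =
      Real.log (ℓ k θ) - Real.log (ℓ k θ₀) + (Real.log (m θ) - Real.log (m θ₀)) := fun k => by
    rw [log_normalizeWeights_sub_log_normalizeWeights (hℓm k),
      Real.log_mul (hℓ k θ).ne' (hm θ).ne', Real.log_mul (hℓ k θ₀).ne' (hm θ₀).ne']
    ring
  rw [poolStep, log_normalizeWeights_sub_log_normalizeWeights (poolStep_weight_pos hℓ hm),
    log_prod_rpow_mul_rpow (fun k => normalizeWeights_pos (hℓm k) θ) (hm θ),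
    log_prod_rpow_mul_rpow (fun k => normalizeWeights_pos (hℓm k) θ₀) (hm θ₀),
    ← Finset.sum_sub_distrib]
  calc ∑ k, (π k * (q k * Real.log (ψ k θ) + (1 - q k) * Real.log (m θ)) -
          π k * (q k * Real.log (ψ k θ₀) + (1 - q k) * Real.log (m θ₀)))
      = ∑ k, (π k * (Real.log (m θ) - Real.log (m θ₀)) +
          π k * q k * (Real.log (ℓ k θ) - Real.log (ℓ k θ₀))) :=
        Finset.sum_congr rfl fun k _ => by linear_combination π k * q k * hψ k
    _ = _ := by rw [Finset.sum_add_distrib, ← Finset.sum_mul, hπ, one_mul]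

variable {m : ℕ → Θ → ℝ} {q : ℕ → ι → ℝ} {ℓ : ℕ → ι → Θ → ℝ}

lemma pos_of_poolStep (hℓ : ∀ n k θ, 0 < ℓ n k θ) (hm₀ : ∀ θ, 0 < m 0 θ)
    (hm : ∀ n, m (n + 1) = poolStep π (q n) (ℓ n) (m n)) (n : ℕ) (θ : Θ) : 0 < m n θ := by
  induction n generalizing θ with
  | zero => exact hm₀ θ
  | succ n ih => rw [hm]; exact poolStep_pos (hℓ n) ih θ

lemma log_sub_log_of_poolStep (hπ : ∑ k, π k = 1) (hℓ : ∀ n k θ, 0 < ℓ n k θ)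
    (hm₀ : ∀ θ, 0 < m 0 θ) (hm : ∀ n, m (n + 1) = poolStep π (q n) (ℓ n) (m n)) (θ θ₀ : Θ)
    (n : ℕ) :
    Real.log (m n θ) - Real.log (m n θ₀) = Real.log (m 0 θ) - Real.log (m 0 θ₀) +
      ∑ k, π k * ∑ j ∈ Finset.range n, q j k * (Real.log (ℓ j k θ) - Real.log (ℓ j k θ₀)) := by
  induction n with
  | zero => simp
  | succ n ih =>
    rw [hm, log_poolStep_sub_log_poolStep hπ (hℓ n) (pos_of_poolStep hℓ hm₀ hm n), ih]
    simp only [Finset.sum_range_succ, mul_add, Finset.sum_add_distrib, mul_assoc]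
    ring

lemma tendsto_log_sub_log_div_of_poolStep (hπ : ∑ k, π k = 1) (hℓ : ∀ n k θ, 0 < ℓ n k θ)
    (hm₀ : ∀ θ, 0 < m 0 θ) (hm : ∀ n, m (n + 1) = poolStep π (q n) (ℓ n) (m n)) {θ θ₀ : Θ}
    {a : ι → ℝ} (ha : ∀ k, Tendsto (fun n : ℕ => (∑ j ∈ Finset.range n,
      q j k * (Real.log (ℓ j k θ) - Real.log (ℓ j k θ₀))) / n) atTop (𝓝 (a k))) :
    Tendsto (fun n : ℕ => (Real.log (m n θ) - Real.log (m n θ₀)) / n) atTop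
      (𝓝 (∑ k, π k * a k)) := by
  have hrw : ∀ n : ℕ, (Real.log (m n θ) - Real.log (m n θ₀)) / n =
      (Real.log (m 0 θ) - Real.log (m 0 θ₀)) / n + ∑ k, π k * ((∑ j ∈ Finset.range n,
        q j k * (Real.log (ℓ j k θ) - Real.log (ℓ j k θ₀))) / n) := fun n => by
    rw [log_sub_log_of_poolStep hπ hℓ hm₀ hm θ θ₀, add_div, Finset.sum_div]
    simp only [mul_div_assoc]
  simp_rw [hrw]
  have := (tendsto_const_div_atTop_nhds_zero_nat (Real.log (m 0 θ) - Real.log (m 0 θ₀))).add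
    (tendsto_finsetSum Finset.univ fun k _ => (ha k).const_mul (π k))
  rwa [zero_add] at this

lemma tendsto_of_poolStep_of_drift_neg (hπ : ∑ k, π k = 1) (hℓ : ∀ n k θ, 0 < ℓ n k θ)
    (hm₀ : ∀ θ, 0 < m 0 θ) (hm : ∀ n, m (n + 1) = poolStep π (q n) (ℓ n) (m n)) {θ₀ : Θ}
    {a : Θ → ι → ℝ} (ha : ∀ θ k, Tendsto (fun n : ℕ => (∑ j ∈ Finset.range n,
      q j k * (Real.log (ℓ j k θ) - Real.log (ℓ j k θ₀))) / n) atTop (𝓝 (a θ k)))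
    (hdrift : ∀ θ ≠ θ₀, ∑ k, π k * a θ k < 0) :
    Tendsto (fun n => m n θ₀) atTop (𝓝 1) := by
  have : Nonempty Θ := ⟨θ₀⟩
  have hpos := pos_of_poolStep hℓ hm₀ hm
  refine tendsto_of_log_sub_log_tendsto_atBot hpos (eventually_atTop.2 ⟨1, fun n hn => ?_⟩)
    fun θ hθ => tendsto_atBot_of_tendsto_div_natCast (hdrift θ hθ)
      (tendsto_log_sub_log_div_of_poolStep hπ hℓ hm₀ hm (ha θ))
  obtain ⟨n, rfl⟩ := Nat.exists_eq_add_of_le' hn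
  rw [hm]
  exact sum_poolStep (hℓ n) (hpos n)

end Pooling

lemma measurable_prodProdProdComm {α β γ δ : Type*} [MeasurableSpace α] [MeasurableSpace β]
    [MeasurableSpace γ] [MeasurableSpace δ] : Measurable (Equiv.prodProdProdComm α β γ δ) := by
  show Measurable fun x : (α × β) × γ × δ => ((x.1.1, x.2.1), (x.1.2, x.2.2))
  fun_prop

lemma MeasureTheory.Measure.map_prodAssoc_symm_prod {α β γ : Type*} [MeasurableSpace α]
    [MeasurableSpace β] [MeasurableSpace γ] (μa : Measure α) (μb : Measure β) (μc : Measure γ)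
    [SFinite μa] [SFinite μb] [SFinite μc] :
    (μa.prod (μb.prod μc)).map MeasurableEquiv.prodAssoc.symm = (μa.prod μb).prod μc := by
  rw [← Measure.prodAssoc_prod, MeasurableEquiv.map_symm_map]

lemma MeasureTheory.Measure.map_prodProdProdComm_prod {α β γ δ : Type*} [MeasurableSpace α]
    [MeasurableSpace β] [MeasurableSpace γ] [MeasurableSpace δ] (μa : Measure α) (μb : Measure β)
    (μc : Measure γ) (μd : Measure δ) [SFinite μa] [SFinite μb] [SFinite μc] [SFinite μd] :
    ((μa.prod μb).prod (μc.prod μd)).map (Equiv.prodProdProdComm α β γ δ) =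
      (μa.prod μc).prod (μb.prod μd) := by
  -- `prodProdProdComm` is `(b, (c, d)) ↦ (c, (b, d))` on the right factor, up to reassociation
  have hinner : (μb.prod (μc.prod μd)).map (MeasurableEquiv.prodAssoc ∘
      Prod.map Prod.swap id ∘ MeasurableEquiv.prodAssoc.symm) = μc.prod (μb.prod μd) := by
    rw [← Measure.map_map (by fun_prop) (by fun_prop), ← Measure.map_map (by fun_prop)
      (by fun_prop), Measure.map_prodAssoc_symm_prod,
      ← Measure.map_prod_map _ _ measurable_swap measurable_id, Measure.prod_swap, Measure.map_id,
      Measure.prodAssoc_prod]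
  have hfactor : ⇑(Equiv.prodProdProdComm α β γ δ) = MeasurableEquiv.prodAssoc.symm ∘
      Prod.map id (MeasurableEquiv.prodAssoc ∘ Prod.map Prod.swap id ∘
        MeasurableEquiv.prodAssoc.symm) ∘ MeasurableEquiv.prodAssoc := rfl
  rw [hfactor, ← Measure.map_map (by fun_prop) (by fun_prop), ← Measure.map_map (by fun_prop)
    (by fun_prop), Measure.prodAssoc_prod, ← Measure.map_prod_map _ _ measurable_id (by fun_prop),
    Measure.map_id, hinner, Measure.map_prodAssoc_symm_prod]

lemma ProbabilityTheory.IndepFun.prodMk_prodMk_of_prodMk {Ω α β γ δ : Type*} [MeasurableSpace Ω]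
    {P : Measure Ω} [IsFiniteMeasure P] [MeasurableSpace α] [MeasurableSpace β] [MeasurableSpace γ]
    [MeasurableSpace δ]
    {f₁ : Ω → α} {f₂ : Ω → β} {g₁ : Ω → γ} {g₂ : Ω → δ}
    (hf₁ : Measurable f₁) (hf₂ : Measurable f₂) (hg₁ : Measurable g₁) (hg₂ : Measurable g₂)
    (hfg : IndepFun (fun ω => (f₁ ω, f₂ ω)) (fun ω => (g₁ ω, g₂ ω)) P)
    (hf : IndepFun f₁ f₂ P) (hg : IndepFun g₁ g₂ P) :
    IndepFun (fun ω => (f₁ ω, g₁ ω)) (fun ω => (f₂ ω, g₂ ω)) P := by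
  have h₁ : IndepFun f₁ g₁ P := hfg.comp measurable_fst measurable_fst
  have h₂ : IndepFun f₂ g₂ P := hfg.comp measurable_snd measurable_snd
  rw [indepFun_iff_map_prod_eq_prod_map_map (by fun_prop) (by fun_prop)] at hfg hf hg h₁ h₂ ⊢
  have hshuffle : (fun ω => ((f₁ ω, g₁ ω), (f₂ ω, g₂ ω))) =
      Equiv.prodProdProdComm α β γ δ ∘ fun ω => ((f₁ ω, f₂ ω), (g₁ ω, g₂ ω)) := rfl
  rw [hshuffle, ← Measure.map_map measurable_prodProdProdComm (by fun_prop), hfg, hf, hg,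
    Measure.map_prodProdProdComm_prod, h₁, h₂]

lemma eq_indicator_of_forall_eq_zero_or_one {Ω : Type*} {X : Ω → ℝ}
    (hX : ∀ ω, X ω = 0 ∨ X ω = 1) : X = {ω | X ω = 1}.indicator 1 := by
  ext ω
  rcases hX ω with h | h <;> simp [h]

section Bernoulli

variable {Ω Ω' : Type*} [MeasurableSpace Ω] [MeasurableSpace Ω'] {P : Measure Ω} {P' : Measure Ω'}

lemma identDistrib_of_forall_eq_zero_or_one [IsProbabilityMeasure P] [IsProbabilityMeasure P']
    {X : Ω → ℝ} {Y : Ω' → ℝ} (hXm : Measurable X) (hYm : Measurable Y)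
    (hX : ∀ ω, X ω = 0 ∨ X ω = 1) (hY : ∀ ω, Y ω = 0 ∨ Y ω = 1)
    (h : P {ω | X ω = 1} = P' {ω | Y ω = 1}) : IdentDistrib X Y P P' := by
  have hA : MeasurableSet {ω | X ω = 1} := hXm (measurableSet_singleton 1)
  have hB : MeasurableSet {ω | Y ω = 1} := hYm (measurableSet_singleton 1)
  refine ⟨hXm.aemeasurable, hYm.aemeasurable, Measure.ext fun s hs => ?_⟩
  classical
  rw [Measure.map_apply hXm hs, Measure.map_apply hYm hs, eq_indicator_of_forall_eq_zero_or_one hX,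
    eq_indicator_of_forall_eq_zero_or_one hY]
  simp only [Pi.one_def, Set.indicator_const_preimage_eq_union]
  split_ifs <;> simp [measure_compl, hA, hB, h]

lemma integral_of_forall_eq_zero_or_one {X : Ω → ℝ} (hXm : Measurable X)
    (hX : ∀ ω, X ω = 0 ∨ X ω = 1) : ∫ ω, X ω ∂P = P.real {ω | X ω = 1} := by
  conv_lhs => rw [eq_indicator_of_forall_eq_zero_or_one hX]
  exact integral_indicator_one (hXm (measurableSet_singleton 1))

lemma integrable_of_forall_eq_zero_or_one [IsFiniteMeasure P] {X : Ω → ℝ} (hXm : Measurable X)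
    (hX : ∀ ω, X ω = 0 ∨ X ω = 1) : Integrable X P :=
  (integrable_const 1).mono' hXm.aestronglyMeasurable
    (ae_of_all _ fun ω => by rcases hX ω with h | h <;> simp [h])

end Bernoulli

section Density

variable {Ω X : Type*} [MeasurableSpace Ω] [MeasurableSpace X] {P : Measure Ω} {ν : Measure X}
  {f₀ : X → ℝ} {Y : Ω → X} {g : X → ℝ}

lemma integrable_comp_iff_of_map_eq_withDensity (hY : Measurable Y) (hf₀ : Measurable f₀)
    (hf₀_nonneg : ∀ x, 0 ≤ f₀ x) (hlaw : P.map Y = ν.withDensity fun x => ENNReal.ofReal (f₀ x))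
    (hg : Measurable g) :
    Integrable (fun ω => g (Y ω)) P ↔ Integrable (fun x => f₀ x * g x) ν := by
  rw [← Function.comp_def, ← integrable_map_measure hg.aestronglyMeasurable hY.aemeasurable, hlaw,
    integrable_withDensity_iff hf₀.ennreal_ofReal (ae_of_all _ fun _ => ENNReal.ofReal_lt_top)]
  simp only [ENNReal.toReal_ofReal (hf₀_nonneg _), mul_comm]

lemma integral_comp_of_map_eq_withDensity (hY : Measurable Y) (hf₀ : Measurable f₀)
    (hf₀_nonneg : ∀ x, 0 ≤ f₀ x) (hlaw : P.map Y = ν.withDensity fun x => ENNReal.ofReal (f₀ x))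
    (hg : Measurable g) : ∫ ω, g (Y ω) ∂P = ∫ x, f₀ x * g x ∂ν := by
  rw [← integral_map hY.aemeasurable hg.aestronglyMeasurable, hlaw,
    integral_withDensity_eq_integral_toReal_smul hf₀.ennreal_ofReal
      (ae_of_all _ fun _ => ENNReal.ofReal_lt_top)]
  simp only [ENNReal.toReal_ofReal (hf₀_nonneg _), smul_eq_mul]

end Density

/-- Gibbs' inequality, integrating `f - g ≤ f * log (f / g)`. -/
lemma integral_mul_log_div_nonneg {X : Type*} [MeasurableSpace X] {ν : Measure X} {f g : X → ℝ}
    (hf : ∀ x, 0 < f x) (hg : ∀ x, 0 < g x) (hf_one : ∫ x, f x ∂ν = 1) (hg_one : ∫ x, g x ∂ν = 1)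
    (hint : Integrable (fun x => f x * Real.log (f x / g x)) ν) :
    0 ≤ ∫ x, f x * Real.log (f x / g x) ∂ν := by
  have hpt : ∀ x, f x - g x ≤ f x * Real.log (f x / g x) := fun x => by
    have h := Real.one_sub_inv_le_log_of_pos (div_pos (hf x) (hg x))
    rw [inv_div] at h
    have := mul_le_mul_of_nonneg_left h (hf x).le
    rwa [mul_sub, mul_one, mul_div_cancel₀ _ (hf x).ne'] at this
  have hfi := integrable_of_integral_eq_one hf_one
  have hgi := integrable_of_integral_eq_one hg_one
  have := integral_mono (f := fun x => f x - g x) (hfi.sub hgi) hint hpt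
  rwa [integral_sub hfi hgi, hf_one, hg_one, sub_self] at this

lemma ae_tendsto_avg_mul_comp {Ω X : Type*} [MeasurableSpace Ω] {P : Measure Ω}
    [IsProbabilityMeasure P] [MeasurableSpace X] {Q : ℕ → Ω → ℝ} {Y : ℕ → Ω → X} {g : X → ℝ}
    (hQ : ∀ n, Measurable (Q n)) (hY : ∀ n, Measurable (Y n)) (hg : Measurable g)
    (hQint : Integrable (Q 0) P) (hgY : Integrable (fun ω => g (Y 0 ω)) P)
    (hQQ : iIndepFun Q P) (hYY : iIndepFun Y P)
    (hQY : IndepFun (fun ω n => Q n ω) (fun ω n => Y n ω) P)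
    (hQid : ∀ n, IdentDistrib (Q n) (Q 0) P P) (hYid : ∀ n, IdentDistrib (Y n) (Y 0) P P) :
    ∀ᵐ ω ∂P, Tendsto (fun n : ℕ => (∑ j ∈ Finset.range n, Q j ω * g (Y j ω)) / n) atTop
      (𝓝 ((∫ ω, Q 0 ω ∂P) * ∫ ω, g (Y 0 ω) ∂P)) := by
  have hQYn : ∀ n, IndepFun (Q n) (Y n) P := fun n =>
    hQY.comp (measurable_pi_apply n) (measurable_pi_apply n)
  have hpair_law : ∀ n, P.map (fun ω => (Q n ω, Y n ω)) = (P.map (Q n)).prod (P.map (Y n)) :=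
    fun n => (indepFun_iff_map_prod_eq_prod_map_map (hQ n).aemeasurable
      (hY n).aemeasurable).mp (hQYn n)
  have hpair_id : ∀ n, IdentDistrib (fun ω => (Q n ω, Y n ω)) (fun ω => (Q 0 ω, Y 0 ω)) P P :=
    fun n => ⟨by fun_prop, by fun_prop, by rw [hpair_law, hpair_law, (hQid n).map_eq,
      (hYid n).map_eq]⟩
  have hpair_indep : Pairwise fun m n =>
      IndepFun (fun ω => (Q m ω, Y m ω)) (fun ω => (Q n ω, Y n ω)) P := fun m n hmn =>
    (hQY.comp (φ := fun F => (F m, F n)) (ψ := fun F => (F m, F n)) (by fun_prop)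
      (by fun_prop)).prodMk_prodMk_of_prodMk (hQ m) (hQ n) (hY m) (hY n) (hQQ.indepFun hmn)
      (hYY.indepFun hmn)
  have hQg : IndepFun (Q 0) (fun ω => g (Y 0 ω)) P := (hQYn 0).comp measurable_id hg
  have hmean : ∫ ω, Q 0 ω * g (Y 0 ω) ∂P = (∫ ω, Q 0 ω ∂P) * ∫ ω, g (Y 0 ω) ∂P :=
    hQg.integral_mul_eq_mul_integral hQint.aestronglyMeasurable hgY.aestronglyMeasurable
  have hG : Measurable fun z : ℝ × X => z.1 * g z.2 := by fun_prop
  rw [← hmean]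
  exact strong_law_ae_real (fun n ω => Q n ω * g (Y n ω)) (hQg.integrable_mul hQint hgY)
    (fun m n hmn => (hpair_indep hmn).comp hG hG) fun n => (hpair_id n).comp hG

lemma ae_tendsto_avg_mul_log_likelihood_ratio {Ω X : Type*} [MeasurableSpace Ω]
    {P : Measure Ω} [IsProbabilityMeasure P] [MeasurableSpace X] {ν : Measure X} {f₀ f : X → ℝ}
    (hf₀ : ∀ x, 0 < f₀ x) (hf : ∀ x, 0 < f x) (hf₀m : Measurable f₀) (hfm : Measurable f)
    (hint : Integrable (fun x => f₀ x * Real.log (f₀ x / f x)) ν)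
    {Q : ℕ → Ω → ℝ} {Y : ℕ → Ω → X} {p : ℝ} (hp : 0 ≤ p)
    (hQm : ∀ n, Measurable (Q n)) (hYm : ∀ n, Measurable (Y n))
    (hQ01 : ∀ n ω, Q n ω = 0 ∨ Q n ω = 1) (hQlaw : ∀ n, P {ω | Q n ω = 1} = ENNReal.ofReal p)
    (hYlaw : ∀ n, P.map (Y n) = ν.withDensity fun x => ENNReal.ofReal (f₀ x))
    (hQQ : iIndepFun Q P) (hYY : iIndepFun Y P)
    (hQY : IndepFun (fun ω n => Q n ω) (fun ω n => Y n ω) P) :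
    ∀ᵐ ω ∂P, Tendsto (fun n : ℕ => (∑ j ∈ Finset.range n,
      Q j ω * (Real.log (f (Y j ω)) - Real.log (f₀ (Y j ω)))) / n) atTop
      (𝓝 (p * -∫ x, f₀ x * Real.log (f₀ x / f x) ∂ν)) := by
  have hL : Measurable fun x => Real.log (f x) - Real.log (f₀ x) := hfm.log.sub hf₀m.log
  have hllr : (fun x => f₀ x * (Real.log (f x) - Real.log (f₀ x))) =
      fun x => -(f₀ x * Real.log (f₀ x / f x)) := funext fun x => by
    rw [Real.log_div (hf₀ x).ne' (hf x).ne']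
    ring
  have hQmean : ∫ ω, Q 0 ω ∂P = p := by
    rw [integral_of_forall_eq_zero_or_one (hQm 0) (hQ01 0), measureReal_def, hQlaw,
      ENNReal.toReal_ofReal hp]
  have hLmean : ∫ ω, (Real.log (f (Y 0 ω)) - Real.log (f₀ (Y 0 ω))) ∂P =
      -∫ x, f₀ x * Real.log (f₀ x / f x) ∂ν := by
    rw [integral_comp_of_map_eq_withDensity (hYm 0) hf₀m (fun x => (hf₀ x).le) (hYlaw 0) hL, hllr,
      integral_neg]
  have hLint : Integrable (fun ω => Real.log (f (Y 0 ω)) - Real.log (f₀ (Y 0 ω))) P := by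
    rw [integrable_comp_iff_of_map_eq_withDensity (hYm 0) hf₀m (fun x => (hf₀ x).le) (hYlaw 0) hL,
      hllr]
    exact hint.neg
  have hQid : ∀ n, IdentDistrib (Q n) (Q 0) P P := fun n =>
    identDistrib_of_forall_eq_zero_or_one (hQm n) (hQm 0) (hQ01 n) (hQ01 0) (by rw [hQlaw, hQlaw])
  have hYid : ∀ n, IdentDistrib (Y n) (Y 0) P P := fun n =>
    ⟨(hYm n).aemeasurable, (hYm 0).aemeasurable, by rw [hYlaw, hYlaw]⟩
  rw [← hQmean, ← hLmean]
  exact ae_tendsto_avg_mul_comp (g := fun x => Real.log (f x) - Real.log (f₀ x)) hQm hYm hL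
    (integrable_of_forall_eq_zero_or_one (hQm 0) (hQ01 0)) hLint hQQ hYY hQY hQid hYid

theorem asymmetric_belief_convergence_general
    {K : ℕ}
    {Θ : Type*} [Fintype Θ] (θ₀ : Θ)
    (π : Fin K → ℝ) (hπ : ∀ k, π k ∈ Set.Ioo (0 : ℝ) 1) (hπsum : ∑ k, π k = 1)
    (p : Fin K → ℝ) (hp : ∀ k, p k ∈ Set.Ioc (0 : ℝ) 1)
    {X : Fin K → Type*} [∀ k, MeasurableSpace (X k)]
    (ν : ∀ k, Measure (X k))
    (f : ∀ k, Θ → X k → ℝ)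
    (hfpos : ∀ k θ x, 0 < f k θ x)
    (hfmeas : ∀ k θ, Measurable (f k θ))
    (hfprob : ∀ k θ, ∫ x, f k θ x ∂ν k = 1)
    (d : Fin K → Θ → ℝ)
    (hdint : ∀ k θ, Integrable (fun x => f k θ₀ x * Real.log (f k θ₀ x / f k θ x)) (ν k))
    (hd : ∀ k θ, d k θ = ∫ x, f k θ₀ x * Real.log (f k θ₀ x / f k θ x) ∂ν k)
    (hglobal : ∀ θ, θ ≠ θ₀ → ∃ k, 0 < d k θ)
    {Ω : Type*} [MeasureSpace Ω] [IsProbabilityMeasure (ℙ : Measure Ω)]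
    (ξ : ∀ k : Fin K, ℕ → Ω → X k)
    (hξmeas : ∀ k i, Measurable (ξ k i))
    (hξindep : ∀ k, iIndepFun (ξ k) ℙ)
    (hξlaw : ∀ k i, Measure.map (ξ k i) ℙ =
      (ν k).withDensity (fun x => ENNReal.ofReal (f k θ₀ x)))
    (q : Fin K → ℕ → Ω → ℝ)
    (hqval : ∀ k i ω, q k i ω = 0 ∨ q k i ω = 1)
    (hqmeas : ∀ k i, Measurable (q k i))
    (hqlaw : ∀ k i, ℙ {ω | q k i ω = 1} = ENNReal.ofReal (p k))
    (hqindep : iIndepFun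
      (fun ki : Fin K × ℕ => q ki.1 ki.2) ℙ)
    (hqξindep : IndepFun (fun ω (ki : Fin K × ℕ) => q ki.1 ki.2 ω)
      (fun ω (ki : Fin K × ℕ) => ξ ki.1 ki.2 ω) ℙ)
    (μ₀ : Θ → ℝ) (hμ₀pos : ∀ θ, 0 < μ₀ θ)
    (ψ : Fin K → ℕ → Ω → Θ → ℝ) (μ : ℕ → Ω → Θ → ℝ)
    (hinit : ∀ ω, μ 0 ω = μ₀)
    (hψ : ∀ (k : Fin K) (i : ℕ) (ω : Ω) (θ : Θ), ψ k (i + 1) ω θ =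
      f k θ (ξ k (i + 1) ω) * μ i ω θ /
        ∑ θ', f k θ' (ξ k (i + 1) ω) * μ i ω θ')
    (hμ : ∀ (i : ℕ) (ω : Ω) (θ : Θ), μ (i + 1) ω θ =
      (∏ k, (ψ k (i + 1) ω θ ^ q k (i + 1) ω *
          μ i ω θ ^ (1 - q k (i + 1) ω)) ^ π k) /
        ∑ θ', ∏ k, (ψ k (i + 1) ω θ' ^ q k (i + 1) ω *
          μ i ω θ' ^ (1 - q k (i + 1) ω)) ^ π k) :
    ∀ᵐ ω ∂ℙ, Tendsto (fun i => μ i ω θ₀) atTop (nhds 1) := by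
  have hstep : ∀ ω n, μ (n + 1) ω = poolStep π (fun k => q k (n + 1) ω)
      (fun k θ => f k θ (ξ k (n + 1) ω)) (μ n ω) := fun ω n => funext fun θ => by
    simp only [hμ, hψ, poolStep, normalizeWeights]
  have hllr : ∀ k θ, ∀ᵐ ω ∂ℙ, Tendsto (fun n : ℕ => (∑ j ∈ Finset.range n, q k (j + 1) ω *
      (Real.log (f k θ (ξ k (j + 1) ω)) - Real.log (f k θ₀ (ξ k (j + 1) ω)))) / n) atTop
      (𝓝 (p k * -d k θ)) := fun k θ => by
    rw [hd]
    exact ae_tendsto_avg_mul_log_likelihood_ratio (hfpos k θ₀) (hfpos k θ) (hfmeas k θ₀)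
      (hfmeas k θ) (hdint k θ) (hp k).1.le (fun n => hqmeas k (n + 1))
      (fun n => hξmeas k (n + 1)) (fun n => hqval k (n + 1)) (fun n => hqlaw k (n + 1))
      (fun n => hξlaw k (n + 1))
      (hqindep.precomp (g := fun n => (k, n + 1)) fun m n h => by simpa using h)
      ((hξindep k).precomp (add_left_injective 1))
      (hqξindep.comp (measurable_pi_lambda _ fun n => measurable_pi_apply (k, n + 1))
        (measurable_pi_lambda _ fun n => measurable_pi_apply (k, n + 1)))
  have hKL : ∀ k θ, 0 ≤ d k θ := fun k θ => hd k θ ▸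
    integral_mul_log_div_nonneg (hfpos k θ₀) (hfpos k θ) (hfprob k θ₀) (hfprob k θ) (hdint k θ)
  filter_upwards [ae_all_iff.2 fun k => ae_all_iff.2 (hllr k)] with ω hω
  refine tendsto_of_poolStep_of_drift_neg hπsum (fun n k θ => hfpos _ _ _)
    (fun θ => hinit ω ▸ hμ₀pos θ) (hstep ω) (fun θ k => hω k θ) fun θ hθ => ?_
  obtain ⟨k₀, hk₀⟩ := hglobal θ hθ
  simp only [mul_neg, Finset.sum_neg_distrib, neg_lt_zero]
  exact Finset.sum_pos' (fun k _ => mul_nonneg (hπ k).1.le (mul_nonneg (hp k).1.le (hKL k θ)))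
    ⟨k₀, Finset.mem_univ k₀, mul_pos (hπ k₀).1 (mul_pos (hp k₀).1 hk₀)⟩

/-- **Theorem 1 (pre-intervention), asymmetric asynchronous communication.**
In addition to the synchronous setup, each agent `k` participates at time `i` according
to a Bernoulli(`p k`) indicator `q k i ∈ {0,1}`, i.i.d. over time, independent across
agents, and independent of all observations.  The fusion center combines
`μ_i(θ) ∝ ∏_k (ψ_{k,i}(θ)^{q_{k,i}} μ_{i-1}(θ)^{1-q_{k,i}})^{π_k}`, filling in its own
prior for non-participating agents.  Then the fusion-center belief on the true hypothesis
converges to one almost surely. -/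
theorem asymmetric_belief_convergence
    {K : ℕ} (hK : 2 ≤ K)
    {Θ : Type*} [Fintype Θ] [Nonempty Θ] (θ₀ : Θ)
    (π : Fin K → ℝ) (hπ : ∀ k, π k ∈ Set.Ioo (0 : ℝ) 1) (hπsum : ∑ k, π k = 1)
    (p : Fin K → ℝ) (hp : ∀ k, p k ∈ Set.Ioc (0 : ℝ) 1)
    {X : Fin K → Type*} [∀ k, MeasurableSpace (X k)]
    (ν : ∀ k, Measure (X k)) (hν : ∀ k, SigmaFinite (ν k))
    (f : ∀ k, Θ → X k → ℝ)
    (hfpos : ∀ k θ x, 0 < f k θ x)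
    (hfmeas : ∀ k θ, Measurable (f k θ))
    (hfprob : ∀ k θ, ∫ x, f k θ x ∂ν k = 1)
    (d : Fin K → Θ → ℝ)
    (hdint : ∀ k θ, Integrable (fun x => f k θ₀ x * Real.log (f k θ₀ x / f k θ x)) (ν k))
    (hd : ∀ k θ, d k θ = ∫ x, f k θ₀ x * Real.log (f k θ₀ x / f k θ x) ∂ν k)
    (hglobal : ∀ θ, θ ≠ θ₀ → ∃ k, 0 < d k θ)
    {Ω : Type*} [MeasureSpace Ω] [IsProbabilityMeasure (ℙ : Measure Ω)]
    (ξ : ∀ k : Fin K, ℕ → Ω → X k)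
    (hξmeas : ∀ k i, Measurable (ξ k i))
    (hξindep : ∀ k, iIndepFun (ξ k) ℙ)
    (hξlaw : ∀ k i, Measure.map (ξ k i) ℙ =
      (ν k).withDensity (fun x => ENNReal.ofReal (f k θ₀ x)))
    (q : Fin K → ℕ → Ω → ℝ)
    (hqval : ∀ k i ω, q k i ω = 0 ∨ q k i ω = 1)
    (hqmeas : ∀ k i, Measurable (q k i))
    (hqlaw : ∀ k i, ℙ {ω | q k i ω = 1} = ENNReal.ofReal (p k))
    (hqindep : iIndepFun
      (fun ki : Fin K × ℕ => q ki.1 ki.2) ℙ)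
    (hqξindep : IndepFun (fun ω (ki : Fin K × ℕ) => q ki.1 ki.2 ω)
      (fun ω (ki : Fin K × ℕ) => ξ ki.1 ki.2 ω) ℙ)
    (μ₀ : Θ → ℝ) (hμ₀pos : ∀ θ, 0 < μ₀ θ) (hμ₀sum : ∑ θ, μ₀ θ = 1)
    (ψ : Fin K → ℕ → Ω → Θ → ℝ) (μ : ℕ → Ω → Θ → ℝ)
    (hinit : ∀ ω, μ 0 ω = μ₀)
    (hψ : ∀ (k : Fin K) (i : ℕ) (ω : Ω) (θ : Θ), ψ k (i + 1) ω θ =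
      f k θ (ξ k (i + 1) ω) * μ i ω θ /
        ∑ θ', f k θ' (ξ k (i + 1) ω) * μ i ω θ')
    (hμ : ∀ (i : ℕ) (ω : Ω) (θ : Θ), μ (i + 1) ω θ =
      (∏ k, (ψ k (i + 1) ω θ ^ q k (i + 1) ω *
          μ i ω θ ^ (1 - q k (i + 1) ω)) ^ π k) /
        ∑ θ', ∏ k, (ψ k (i + 1) ω θ' ^ q k (i + 1) ω *
          μ i ω θ' ^ (1 - q k (i + 1) ω)) ^ π k) :
    ∀ᵐ ω ∂ℙ, Tendsto (fun i => μ i ω θ₀) atTop (nhds 1) :=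
  asymmetric_belief_convergence_general θ₀ π hπ hπsum p hp ν f hfpos hfmeas hfprob d hdint hd
    hglobal ξ hξmeas hξindep hξlaw q hqval hqmeas hqlaw hqindep hqξindep μ₀ hμ₀pos ψ μ hinit hψ hμ
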